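/- Let Y = Σ_{α ∈ A} y_α Ψ_α(X₁, X₂) be a finite orthonormal polynomial chaos expansion over a set A of multi-indices α = (α₁, α₂) (with Ψ_{(0,0)} = 1), where X₁, X₂ are independent and Ψ_α(x₁,x₂) = Ψ_{α₁}(x₁)Ψ_{α₂}(x₂). Then the first-order Sobol' index of X₁ is S₁ = (Σ_{α: α₁ ≥ 1, α₂ = 0} y_α²) / (Σ_{α ≠ (0,0)} y_α²), i.e., Var(E(Y|X₁)) = Σ_{α₁ ≥ 1, α₂ = 0} y_α². -/

import Mathlib

/-!
The products `Ψ α.1 (X₁ ω) * Ψ α.2 (X₂ ω)` are orthonormal in `L²(μ)` by independence, and the one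
for `α = (0, 0)` is the constant `1`; hence the variance of any finite combination of them is the
sum of the squares of its non-constant coefficients. Conditioning on `X₁` keeps the factor
`Ψ α.1 (X₁ ω)` and replaces `Ψ α.2 (X₂ ω)` by its mean, which is `1` for `α.2 = 0` and `0`
otherwise, so `E(Y | X₁)` is again such a combination, with the coefficients `α.2 ≠ 0` set to `0`.
-/

open MeasureTheory ProbabilityTheory Finset

namespace ProbabilityTheory

section OrthonormalExpansion

variable {Ω ι : Type*} [MeasurableSpace Ω] {μ : Measure Ω} {e : ι → Ω → ℝ}

lemma integrable_mul_sum (hint : ∀ i j, Integrable (fun ω => e i ω * e j ω) μ) (i : ι)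
    (s : Finset ι) (a : ι → ℝ) : Integrable (fun ω => e i ω * ∑ j ∈ s, a j * e j ω) μ := by
  simp_rw [mul_sum, mul_left_comm (e i _)]
  exact integrable_finsetSum _ fun j _ => (hint i j).const_mul (a j)

variable [DecidableEq ι]

lemma integral_mul_sum_of_orthonormal
    (horth : ∀ i j, ∫ ω, e i ω * e j ω ∂μ = if i = j then 1 else 0)
    (hint : ∀ i j, Integrable (fun ω => e i ω * e j ω) μ) (i : ι) (s : Finset ι) (a : ι → ℝ) :
    ∫ ω, e i ω * ∑ j ∈ s, a j * e j ω ∂μ = if i ∈ s then a i else 0 := by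
  simp_rw [mul_sum, mul_left_comm (e i _)]
  rw [integral_finsetSum _ fun j _ => (hint i j).const_mul (a j)]
  simp_rw [integral_const_mul, horth, mul_ite, mul_one, mul_zero]
  exact sum_ite_eq s i a

lemma variance_sum_of_orthonormal [IsProbabilityMeasure μ]
    (horth : ∀ i j, ∫ ω, e i ω * e j ω ∂μ = if i = j then 1 else 0)
    (hint : ∀ i j, Integrable (fun ω => e i ω * e j ω) μ) {i₀ : ι} (he₀ : e i₀ = fun _ => 1)
    (s : Finset ι) (a : ι → ℝ) :
    variance (fun ω => ∑ i ∈ s, a i * e i ω) μ = ∑ i ∈ s.filter (fun i => i ≠ i₀), a i ^ 2 := by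
  set W := fun ω => ∑ i ∈ s, a i * e i ω
  have hW_sq : (fun ω => W ω ^ 2) = fun ω => ∑ i ∈ s, a i * (e i ω * W ω) := by
    ext ω; simp only [W, sq, sum_mul, mul_assoc]
  have hsq_int : Integrable (fun ω => W ω ^ 2) μ := by
    rw [hW_sq]
    exact integrable_finsetSum _ fun i _ => (integrable_mul_sum hint i s a).const_mul _
  have hsq : ∫ ω, W ω ^ 2 ∂μ = ∑ i ∈ s, a i ^ 2 := by
    rw [hW_sq, integral_finsetSum _ fun i _ => (integrable_mul_sum hint i s a).const_mul _]
    simp only [integral_const_mul, integral_mul_sum_of_orthonormal horth hint]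
    exact sum_congr rfl fun i hi => by rw [if_pos hi, sq]
  have hmean : ∫ ω, W ω ∂μ = if i₀ ∈ s then a i₀ else 0 := by
    simpa [he₀] using integral_mul_sum_of_orthonormal horth hint i₀ s a
  have hW : MemLp W 2 μ := by
    have hW_int : Integrable W μ := by simpa [he₀] using integrable_mul_sum hint i₀ s a
    exact (memLp_two_iff_integrable_sq hW_int.aestronglyMeasurable).2 hsq_int
  rw [variance_eq_sub hW, filter_ne', Pi.pow_def, hsq, hmean]
  split_ifs with hi₀
  · rw [sum_erase_eq_sub hi₀]
  · rw [erase_eq_of_notMem hi₀]; ring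

end OrthonormalExpansion

section IndependentProduct

variable {Ω β γ : Type*} [MeasurableSpace Ω] [MeasurableSpace β] [MeasurableSpace γ]
  {μ : Measure Ω} {X₁ : Ω → β} {X₂ : Ω → γ}

lemma IndepFun.integral_comp_mul_comp_mul (hindep : IndepFun X₁ X₂ μ) (hX₁ : Measurable X₁)
    (hX₂ : Measurable X₂) {f₁ g₁ : β → ℝ} {f₂ g₂ : γ → ℝ} (hf₁ : Measurable f₁)
    (hg₁ : Measurable g₁) (hf₂ : Measurable f₂) (hg₂ : Measurable g₂) :
    ∫ ω, f₁ (X₁ ω) * f₂ (X₂ ω) * (g₁ (X₁ ω) * g₂ (X₂ ω)) ∂μ =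
      (∫ ω, f₁ (X₁ ω) * g₁ (X₁ ω) ∂μ) * ∫ ω, f₂ (X₂ ω) * g₂ (X₂ ω) ∂μ := by
  have h := (hindep.comp (hf₁.mul hg₁) (hf₂.mul hg₂)).integral_fun_mul_eq_mul_integral
    ((hf₁.mul hg₁).comp hX₁).aestronglyMeasurable ((hf₂.mul hg₂).comp hX₂).aestronglyMeasurable
  simp only [Function.comp_apply, Pi.mul_apply] at h
  rw [← h]
  congr 1 with ω
  ring

lemma IndepFun.condExp_comp_mul_comp [IsFiniteMeasure μ] (hindep : IndepFun X₁ X₂ μ)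
    (hX₁ : Measurable X₁) (hX₂ : Measurable X₂) {f : β → ℝ} {g : γ → ℝ} (hf : Measurable f)
    (hg : Measurable g) (hfg : Integrable (fun ω => f (X₁ ω) * g (X₂ ω)) μ)
    (hg_int : Integrable (fun ω => g (X₂ ω)) μ) :
    μ[fun ω => f (X₁ ω) * g (X₂ ω) | MeasurableSpace.comap X₁ inferInstance] =ᵐ[μ]
      fun ω => f (X₁ ω) * ∫ ω', g (X₂ ω') ∂μ := by
  have hf_meas : StronglyMeasurable[MeasurableSpace.comap X₁ inferInstance] (fun ω => f (X₁ ω)) :=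
    (hf.comp (Measurable.of_comap_le le_rfl)).stronglyMeasurable
  have hg_meas : StronglyMeasurable[MeasurableSpace.comap X₂ inferInstance] (fun ω => g (X₂ ω)) :=
    (hg.comp (Measurable.of_comap_le le_rfl)).stronglyMeasurable
  have hg_cond : μ[fun ω => g (X₂ ω) | MeasurableSpace.comap X₁ inferInstance] =ᵐ[μ]
      fun _ => ∫ ω', g (X₂ ω') ∂μ :=
    condExp_indep_eq hX₂.comap_le hX₁.comap_le hg_meas
      ((IndepFun_iff_Indep X₂ X₁ μ).1 hindep.symm)
  exact (condExp_mul_of_stronglyMeasurable_left (g := fun ω => g (X₂ ω)) hf_meas hfg hg_int).trans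
    (hg_cond.mono fun ω hω => by simp [hω])

variable {ι₁ ι₂ : Type*} {Ψ₁ : ι₁ → β → ℝ} {Ψ₂ : ι₂ → γ → ℝ}

lemma IndepFun.integral_tensor_mul_tensor [DecidableEq ι₁] [DecidableEq ι₂]
    (hindep : IndepFun X₁ X₂ μ) (hX₁ : Measurable X₁) (hX₂ : Measurable X₂)
    (hmeas₁ : ∀ n, Measurable (Ψ₁ n)) (hmeas₂ : ∀ n, Measurable (Ψ₂ n))
    (horth₁ : ∀ n m, ∫ ω, Ψ₁ n (X₁ ω) * Ψ₁ m (X₁ ω) ∂μ = if n = m then 1 else 0)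
    (horth₂ : ∀ n m, ∫ ω, Ψ₂ n (X₂ ω) * Ψ₂ m (X₂ ω) ∂μ = if n = m then 1 else 0)
    (α β : ι₁ × ι₂) :
    ∫ ω, Ψ₁ α.1 (X₁ ω) * Ψ₂ α.2 (X₂ ω) * (Ψ₁ β.1 (X₁ ω) * Ψ₂ β.2 (X₂ ω)) ∂μ =
      if α = β then 1 else 0 := by
  rw [hindep.integral_comp_mul_comp_mul hX₁ hX₂ (hmeas₁ _) (hmeas₁ _) (hmeas₂ _) (hmeas₂ _),
    horth₁, horth₂]
  split_ifs <;> simp_all [Prod.ext_iff]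

lemma IndepFun.condExp_sum_tensor [IsFiniteMeasure μ] (hindep : IndepFun X₁ X₂ μ)
    (hX₁ : Measurable X₁) (hX₂ : Measurable X₂) (hmeas₁ : ∀ n, Measurable (Ψ₁ n))
    (hmeas₂ : ∀ n, Measurable (Ψ₂ n))
    (hint : ∀ α : ι₁ × ι₂, Integrable (fun ω => Ψ₁ α.1 (X₁ ω) * Ψ₂ α.2 (X₂ ω)) μ)
    (hint₂ : ∀ m, Integrable (fun ω => Ψ₂ m (X₂ ω)) μ) (s : Finset (ι₁ × ι₂)) (a : ι₁ × ι₂ → ℝ) :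
    μ[fun ω => ∑ α ∈ s, a α * (Ψ₁ α.1 (X₁ ω) * Ψ₂ α.2 (X₂ ω)) |
        MeasurableSpace.comap X₁ inferInstance] =ᵐ[μ]
      fun ω => ∑ α ∈ s, a α * (Ψ₁ α.1 (X₁ ω) * ∫ ω', Ψ₂ α.2 (X₂ ω') ∂μ) := by
  have hterm : ∀ α ∈ s, μ[fun ω => a α * (Ψ₁ α.1 (X₁ ω) * Ψ₂ α.2 (X₂ ω)) |
      MeasurableSpace.comap X₁ inferInstance] =ᵐ[μ]
        fun ω => a α * (Ψ₁ α.1 (X₁ ω) * ∫ ω', Ψ₂ α.2 (X₂ ω') ∂μ) := fun α _ =>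
    (condExp_smul (a α) _ _).trans <|
      ((hindep.condExp_comp_mul_comp hX₁ hX₂ (hmeas₁ α.1) (hmeas₂ α.2) (hint α)
        (hint₂ α.2)).const_smul (a α))
  have hsum_fun : (fun ω => ∑ α ∈ s, a α * (Ψ₁ α.1 (X₁ ω) * Ψ₂ α.2 (X₂ ω))) =
      ∑ α ∈ s, fun ω => a α * (Ψ₁ α.1 (X₁ ω) * Ψ₂ α.2 (X₂ ω)) := by
    ext ω; rw [Finset.sum_apply]
  rw [hsum_fun]
  refine (condExp_finsetSum (fun α _ => (hint α).const_mul (a α)) _).trans ?_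
  filter_upwards [(Filter.eventually_all_finset s).2 hterm] with ω hω
  rw [Finset.sum_apply]
  exact sum_congr rfl hω

end IndependentProduct

end ProbabilityTheory

/-- First-order Sobol' index of `X₁` from a finite orthonormal bivariate chaos
expansion: `Var(E(Y|X₁)) = Σ_{α₁ ≥ 1, α₂ = 0} y_α²` and
`Var(Y) = Σ_{α ≠ (0,0)} y_α²`, hence `S₁` is the corresponding ratio. -/
theorem sobol_first_order_from_chaos
    {Ω : Type*} [MeasurableSpace Ω] (μ : Measure Ω) [IsProbabilityMeasure μ]
    (X₁ X₂ : Ω → ℝ) (hX₁ : Measurable X₁) (hX₂ : Measurable X₂)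
    (hindep : IndepFun X₁ X₂ μ)
    (Ψ : ℕ → ℝ → ℝ) (hΨ0 : Ψ 0 = fun _ => 1)
    (hmeas : ∀ n, Measurable (Ψ n))
    (horth₁ : ∀ n m : ℕ, (∫ ω, Ψ n (X₁ ω) * Ψ m (X₁ ω) ∂μ) = if n = m then 1 else 0)
    (horth₂ : ∀ n m : ℕ, (∫ ω, Ψ n (X₂ ω) * Ψ m (X₂ ω) ∂μ) = if n = m then 1 else 0)
    (hint : ∀ n m k l : ℕ,
      Integrable (fun ω => Ψ n (X₁ ω) * Ψ m (X₂ ω) * (Ψ k (X₁ ω) * Ψ l (X₂ ω))) μ)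
    (A : Finset (ℕ × ℕ)) (y : ℕ × ℕ → ℝ) (Y : Ω → ℝ)
    (hY : Y = fun ω => ∑ α ∈ A, y α * (Ψ α.1 (X₁ ω) * Ψ α.2 (X₂ ω))) :
    variance (μ[Y | MeasurableSpace.comap X₁ inferInstance]) μ =
        ∑ α ∈ A.filter (fun α => 1 ≤ α.1 ∧ α.2 = 0), (y α) ^ 2 ∧
      variance Y μ = ∑ α ∈ A.filter (fun α => α ≠ (0, 0)), (y α) ^ 2 ∧
      (variance Y μ ≠ 0 →
        variance (μ[Y | MeasurableSpace.comap X₁ inferInstance]) μ / variance Y μ =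
          (∑ α ∈ A.filter (fun α => 1 ≤ α.1 ∧ α.2 = 0), (y α) ^ 2) /
            (∑ α ∈ A.filter (fun α => α ≠ (0, 0)), (y α) ^ 2)) := by
  have hvar := variance_sum_of_orthonormal (e := fun α ω => Ψ α.1 (X₁ ω) * Ψ α.2 (X₂ ω))
    (hindep.integral_tensor_mul_tensor hX₁ hX₂ hmeas hmeas horth₁ horth₂)
    (fun α β => hint _ _ _ _) (i₀ := (0, 0)) (by simp [hΨ0]) A
  have hmean₂ : ∀ m, ∫ ω, Ψ m (X₂ ω) ∂μ = if m = 0 then 1 else 0 := fun m => by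
    simpa [hΨ0] using horth₂ m 0
  set z : ℕ × ℕ → ℝ := fun α => if α.2 = 0 then y α else 0
  have hcond : μ[Y | MeasurableSpace.comap X₁ inferInstance] =ᵐ[μ]
      fun ω => ∑ α ∈ A, z α * (Ψ α.1 (X₁ ω) * Ψ α.2 (X₂ ω)) := by
    refine hY ▸ (hindep.condExp_sum_tensor hX₁ hX₂ hmeas hmeas
      (fun α => by simpa [hΨ0] using hint α.1 α.2 0 0)
      (fun m => by simpa [hΨ0] using hint 0 m 0 0) A y).trans
      (.of_forall fun ω => sum_congr rfl fun α _ => ?_)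
    by_cases h : α.2 = 0 <;> simp [z, h, hmean₂, hΨ0]
  have hz : ∑ α ∈ A.filter (fun α => α ≠ (0, 0)), z α ^ 2 =
      ∑ α ∈ A.filter (fun α => 1 ≤ α.1 ∧ α.2 = 0), y α ^ 2 := by
    rw [sum_filter, sum_filter]
    refine sum_congr rfl fun ⟨n, m⟩ _ => ?_
    by_cases hm : m = 0 <;> by_cases hn : n = 0 <;> simp [z, hm, hn, Nat.one_le_iff_ne_zero]
  have hvar_cond : variance (μ[Y | MeasurableSpace.comap X₁ inferInstance]) μ =
      ∑ α ∈ A.filter (fun α => 1 ≤ α.1 ∧ α.2 = 0), y α ^ 2 := by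
    rw [variance_congr hcond, hvar, hz]
  have hvar_Y : variance Y μ = ∑ α ∈ A.filter (fun α => α ≠ (0, 0)), y α ^ 2 := by
    rw [hY, hvar]
  exact ⟨hvar_cond, hvar_Y, fun _ => by rw [hvar_cond, hvar_Y]⟩
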